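/- Let T be a closed right-linear operator on a Clifford Banach module V and let s be a paravector. If Q_s[T] := T² - 2 s_0 T + |s|² (with domain dom(T²)) has a bounded everywhere-defined inverse, then the ℝ-linear operator T - 𝓘^R s (where (𝓘^R s)(v) = v s) is bijective from dom(T) onto V, with inverse Q_s[T]^{-1} composed appropriately; in particular (T - 𝓘^R s̄) Q_s[T]^{-1} (T - 𝓘^R s) v = v for all v ∈ dom(T) and (T - 𝓘^R s)(T - 𝓘^R s̄) Q_s[T]^{-1} v = v for all v ∈ V. -/

import Mathlib

noncomputable section

open scoped BigOperators

/-- The negative-definite quadratic form on `Fin d → ℝ`, so that the Clifford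
algebra generators satisfy `eᵢ² = -1` and anticommute. -/
def negQ (d : ℕ) : QuadraticForm ℝ (Fin d → ℝ) :=
  QuadraticMap.weightedSumSquares ℝ (fun _ : Fin d => (-1 : ℝ))

/-- The real Clifford algebra ℝ_d. -/
abbrev Cl (d : ℕ) : Type := CliffordAlgebra (negQ d)

/-- The paravector `s₀ + s₁e₁ + ⋯ + s_d e_d`. -/
def pv {d : ℕ} (s₀ : ℝ) (v : Fin d → ℝ) : Cl d :=
  algebraMap ℝ (Cl d) s₀ + CliffordAlgebra.ι (negQ d) v

/-- The Clifford conjugate `s₀ - s₁e₁ - ⋯ - s_d e_d` of a paravector. -/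
def pvConj {d : ℕ} (s₀ : ℝ) (v : Fin d → ℝ) : Cl d :=
  algebraMap ℝ (Cl d) s₀ - CliffordAlgebra.ι (negQ d) v

/-- The squared modulus `s₀² + s₁² + ⋯ + s_d²` of a paravector. -/
def pvNormSq {d : ℕ} (s₀ : ℝ) (v : Fin d → ℝ) : ℝ := s₀ ^ 2 + ∑ i, v i ^ 2

/-- Right multiplication `v ↦ v·a` on a right Clifford module `V`. -/
def rmul {d : ℕ} {V : Type*} [AddCommGroup V] [Module (Cl d)ᵐᵒᵖ V]
    (v : V) (a : Cl d) : V := MulOpposite.op a • v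

/-- A right-linear operator `T : dom(T) ⊆ V → V` on a right Clifford module. -/
structure RightLinearOp (d : ℕ) (V : Type*) [AddCommGroup V]
    [Module (Cl d)ᵐᵒᵖ V] where
  dom : Set V
  toFun : V → V
  zero_mem : (0 : V) ∈ dom
  add_mem : ∀ ⦃v w : V⦄, v ∈ dom → w ∈ dom → v + w ∈ dom
  smul_mem : ∀ (a : (Cl d)ᵐᵒᵖ) ⦃v : V⦄, v ∈ dom → a • v ∈ dom
  map_add' : ∀ ⦃v w : V⦄, v ∈ dom → w ∈ dom → toFun (v + w) = toFun v + toFun w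
  map_smul' : ∀ (a : (Cl d)ᵐᵒᵖ) ⦃v : V⦄, v ∈ dom → toFun (a • v) = a • toFun v

namespace RightLinearOp

variable {d : ℕ} {V : Type*} [NormedAddCommGroup V] [NormedSpace ℝ V]
  [Module (Cl d)ᵐᵒᵖ V] [IsScalarTower ℝ (Cl d)ᵐᵒᵖ V]

/-- `T` is a closed operator: its graph is closed in `V × V`. -/
def IsClosedOp (T : RightLinearOp d V) : Prop :=
  IsClosed {p : V × V | p.1 ∈ T.dom ∧ p.2 = T.toFun p.1}

/-- The domain of `T²`. -/
def dom2 (T : RightLinearOp d V) : Set V := {v | v ∈ T.dom ∧ T.toFun v ∈ T.dom}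

/-- The operator `Q_s[T] = T² - 2s₀T + |s|²`, as a function (to be used on `dom2`);
it depends only on `s₀` and `|s|²` (denoted `nsq`). -/
def qs (T : RightLinearOp d V) (s₀ nsq : ℝ) (v : V) : V :=
  T.toFun (T.toFun v) - (2 * s₀) • T.toFun v + nsq • v

/-- `Qi` is a bounded, everywhere defined, two-sided inverse of
`Q_s[T] : dom(T²) → V`. -/
def IsQInv (T : RightLinearOp d V) (s₀ nsq : ℝ) (Qi : V →L[ℝ] V) : Prop :=
  (∀ v : V, Qi v ∈ T.dom2) ∧
  (∀ v ∈ T.dom2, Qi (T.qs s₀ nsq v) = v) ∧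
  (∀ v : V, T.qs s₀ nsq (Qi v) = v)

/-- The paravector `s = (s₀, sv)` belongs to the `S`-resolvent set of `T`,
i.e. `Q_s[T]⁻¹ ∈ B(V)`. -/
def InRhoS (T : RightLinearOp d V) (s₀ : ℝ) (sv : Fin d → ℝ) : Prop :=
  ∃ Qi : V →L[ℝ] V, T.IsQInv s₀ (pvNormSq s₀ sv) Qi

end RightLinearOp

/-!
The paravectors `s` and `s̄` satisfy `s s̄ = s̄ s = |s|²` and `s + s̄ = 2 s₀`, and `T` commutes
with right multiplications, so on `dom(T²)` the operator `Q_s[T]` factors both as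
`(T - 𝓘ᴿ s̄)(T - 𝓘ᴿ s)` and as `(T - 𝓘ᴿ s)(T - 𝓘ᴿ s̄)`. The second factorization makes
`(T - 𝓘ᴿ s̄) Q_s[T]⁻¹` a right inverse of `T - 𝓘ᴿ s`; the first puts the kernel of `T - 𝓘ᴿ s`
inside that of `Q_s[T]`, which is trivial. A right inverse of an injective map is a left inverse.
-/

section Paravector

variable {d : ℕ} (s₀ : ℝ) (sv : Fin d → ℝ)

lemma negQ_apply (v : Fin d → ℝ) : negQ d v = -∑ i, v i ^ 2 := by
  simp [negQ, QuadraticMap.weightedSumSquares_apply, sq, Finset.sum_neg_distrib]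

lemma pv_mul_pvConj : pv s₀ sv * pvConj s₀ sv = algebraMap ℝ (Cl d) (pvNormSq s₀ sv) := by
  unfold pv pvConj pvNormSq
  rw [add_mul, mul_sub, mul_sub, CliffordAlgebra.ι_sq_scalar,
    ← Algebra.commutes s₀ (CliffordAlgebra.ι (negQ d) sv), negQ_apply,
    sub_add_sub_cancel, ← map_mul, ← map_sub]
  congr 1
  ring

lemma pvConj_mul_pv : pvConj s₀ sv * pv s₀ sv = algebraMap ℝ (Cl d) (pvNormSq s₀ sv) := by
  simpa [pv, pvConj, pvNormSq, sub_eq_add_neg] using pv_mul_pvConj s₀ (-sv)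

lemma pv_add_pvConj : pv s₀ sv + pvConj s₀ sv = algebraMap ℝ (Cl d) (2 * s₀) := by
  unfold pv pvConj
  rw [map_mul, map_ofNat, two_mul]
  abel

end Paravector

section RightMul

variable {d : ℕ} {V : Type*} [AddCommGroup V] [Module (Cl d)ᵐᵒᵖ V]

lemma rmul_rmul (v : V) (a b : Cl d) : rmul (rmul v a) b = rmul v (a * b) := by
  rw [rmul, rmul, rmul, MulOpposite.op_mul, mul_smul]

lemma sub_rmul (v w : V) (a : Cl d) : rmul (v - w) a = rmul v a - rmul w a :=
  smul_sub _ _ _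

lemma rmul_add (v : V) (a b : Cl d) : rmul v (a + b) = rmul v a + rmul v b := by
  rw [rmul, rmul, rmul, MulOpposite.op_add, add_smul]

lemma rmul_algebraMap [Module ℝ V] [IsScalarTower ℝ (Cl d)ᵐᵒᵖ V] (v : V) (r : ℝ) :
    rmul v (algebraMap ℝ (Cl d) r) = r • v := by
  rw [rmul, ← MulOpposite.algebraMap_apply, algebraMap_smul]

namespace RightLinearOp

variable (T : RightLinearOp d V)

lemma rmul_mem {v : V} (hv : v ∈ T.dom) (a : Cl d) : rmul v a ∈ T.dom :=
  T.smul_mem _ hv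

lemma map_rmul {v : V} (hv : v ∈ T.dom) (a : Cl d) :
    T.toFun (rmul v a) = rmul (T.toFun v) a :=
  T.map_smul' _ hv

lemma sub_mem {v w : V} (hv : v ∈ T.dom) (hw : w ∈ T.dom) : v - w ∈ T.dom := by
  simpa [sub_eq_add_neg] using T.add_mem hv (T.smul_mem (-1) hw)

lemma map_sub {v w : V} (hv : v ∈ T.dom) (hw : w ∈ T.dom) :
    T.toFun (v - w) = T.toFun v - T.toFun w := by
  simpa [sub_eq_add_neg] using
    (T.map_add' hv (T.smul_mem (-1) hw)).trans (congrArg _ (T.map_smul' (-1) hw))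

lemma map_zero : T.toFun 0 = 0 := by
  simpa using T.map_sub T.zero_mem T.zero_mem

/-- The operator `T - 𝓘ᴿ a`. -/
def subRmul (a : Cl d) (v : V) : V := T.toFun v - rmul v a

lemma subRmul_mem {v : V} (hv : v ∈ T.dom) (hTv : T.toFun v ∈ T.dom) (a : Cl d) :
    T.subRmul a v ∈ T.dom :=
  T.sub_mem hTv (T.rmul_mem hv a)

lemma subRmul_sub {v w : V} (hv : v ∈ T.dom) (hw : w ∈ T.dom) (a : Cl d) :
    T.subRmul a (v - w) = T.subRmul a v - T.subRmul a w := by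
  rw [subRmul, T.map_sub hv hw, sub_rmul, subRmul, subRmul]
  abel

end RightLinearOp

end RightMul

namespace RightLinearOp

variable {d : ℕ} {V : Type*} [NormedAddCommGroup V] [NormedSpace ℝ V]
  [Module (Cl d)ᵐᵒᵖ V] [IsScalarTower ℝ (Cl d)ᵐᵒᵖ V]
  (T : RightLinearOp d V) {s₀ n : ℝ} {a b : Cl d}

lemma subRmul_subRmul (hab : a * b = algebraMap ℝ (Cl d) n)
    (hsum : a + b = algebraMap ℝ (Cl d) (2 * s₀)) {v : V} (hv : v ∈ T.dom2) :
    T.subRmul b (T.subRmul a v) = T.qs s₀ n v := by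
  obtain ⟨hv, hTv⟩ := hv
  rw [subRmul, subRmul, T.map_sub hTv (T.rmul_mem hv a), T.map_rmul hv, sub_rmul, rmul_rmul,
    hab, rmul_algebraMap, qs, ← rmul_algebraMap (d := d) (T.toFun v) (2 * s₀), ← hsum, rmul_add]
  abel

lemma injOn_subRmul {Qi : V →L[ℝ] V} (hQi : T.IsQInv s₀ n Qi)
    (hab : a * b = algebraMap ℝ (Cl d) n) (hsum : a + b = algebraMap ℝ (Cl d) (2 * s₀)) :
    Set.InjOn (T.subRmul a) T.dom := by
  suffices h : ∀ u ∈ T.dom, T.subRmul a u = 0 → u = 0 from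
    fun v hv w hw hvw ↦ sub_eq_zero.1 <|
      h _ (T.sub_mem hv hw) (by rw [T.subRmul_sub hv hw, hvw, sub_self])
  intro u hu hu0
  have hTu : T.toFun u = rmul u a := sub_eq_zero.1 hu0
  have hu2 : u ∈ T.dom2 := ⟨hu, hTu ▸ T.rmul_mem hu a⟩
  have hQu : T.qs s₀ n u = 0 := by
    rw [← T.subRmul_subRmul hab hsum hu2, hu0, subRmul, T.map_zero, rmul, smul_zero, sub_zero]
  simpa [hQu] using (hQi.2.1 u hu2).symm

lemma subRmul_subRmul_qInv {Qi : V →L[ℝ] V} (hQi : T.IsQInv s₀ n Qi)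
    (hba : b * a = algebraMap ℝ (Cl d) n) (hsum : a + b = algebraMap ℝ (Cl d) (2 * s₀))
    (v : V) : T.subRmul a (T.subRmul b (Qi v)) = v := by
  rw [T.subRmul_subRmul hba (add_comm b a ▸ hsum) (hQi.1 v)]
  exact hQi.2.2 v

lemma subRmul_qInv_subRmul {Qi : V →L[ℝ] V} (hQi : T.IsQInv s₀ n Qi)
    (hab : a * b = algebraMap ℝ (Cl d) n) (hba : b * a = algebraMap ℝ (Cl d) n)
    (hsum : a + b = algebraMap ℝ (Cl d) (2 * s₀)) {v : V} (hv : v ∈ T.dom) :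
    T.subRmul b (Qi (T.subRmul a v)) = v :=
  T.injOn_subRmul hQi hab hsum (T.subRmul_mem (hQi.1 _).1 (hQi.1 _).2 b) hv
    (T.subRmul_subRmul_qInv hQi hba hsum _)

lemma bijOn_subRmul {Qi : V →L[ℝ] V} (hQi : T.IsQInv s₀ n Qi)
    (hab : a * b = algebraMap ℝ (Cl d) n) (hba : b * a = algebraMap ℝ (Cl d) n)
    (hsum : a + b = algebraMap ℝ (Cl d) (2 * s₀)) :
    Set.BijOn (T.subRmul a) T.dom Set.univ :=
  ⟨Set.mapsTo_univ _ _, T.injOn_subRmul hQi hab hsum, fun v _ ↦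
    ⟨_, T.subRmul_mem (hQi.1 v).1 (hQi.1 v).2 b, T.subRmul_subRmul_qInv hQi hba hsum v⟩⟩

end RightLinearOp

open RightLinearOp in
theorem qinv_implies_first_order_bijective {d : ℕ} {V : Type*}
    [NormedAddCommGroup V] [NormedSpace ℝ V]
    [Module (Cl d)ᵐᵒᵖ V] [IsScalarTower ℝ (Cl d)ᵐᵒᵖ V]
    (T : RightLinearOp d V)
    (s₀ : ℝ) (sv : Fin d → ℝ) (Qi : V →L[ℝ] V)
    (hQi : T.IsQInv s₀ (pvNormSq s₀ sv) Qi) :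
    Set.BijOn (fun v => T.toFun v - rmul v (pv s₀ sv)) T.dom Set.univ ∧
    (∀ v ∈ T.dom,
      Qi (T.toFun v - rmul v (pv s₀ sv)) ∈ T.dom2 ∧
      T.toFun (Qi (T.toFun v - rmul v (pv s₀ sv)))
        - rmul (Qi (T.toFun v - rmul v (pv s₀ sv))) (pvConj s₀ sv) = v) ∧
    (∀ v : V,
      T.toFun (T.toFun (Qi v) - rmul (Qi v) (pvConj s₀ sv))
        - rmul (T.toFun (Qi v) - rmul (Qi v) (pvConj s₀ sv)) (pv s₀ sv) = v) :=
  ⟨T.bijOn_subRmul hQi (pv_mul_pvConj s₀ sv) (pvConj_mul_pv s₀ sv) (pv_add_pvConj s₀ sv),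
    fun _ hv ↦ ⟨hQi.1 _, T.subRmul_qInv_subRmul hQi (pv_mul_pvConj s₀ sv)
      (pvConj_mul_pv s₀ sv) (pv_add_pvConj s₀ sv) hv⟩,
    T.subRmul_subRmul_qInv hQi (pvConj_mul_pv s₀ sv) (pv_add_pvConj s₀ sv)⟩
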